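/- arXiv:2412.02416 — 3 statements merged into one kernel-verified Lean document; each statement's English description precedes it below -/
import Mathlib

section
/- Let u, v ∈ ℂ and σ ∈ ℝ satisfy Re(u) + 2σ > 0, Re(v) + 2σ > 0, and Re(u) + Re(v) + 2σ > 0. Then all the series below converge absolutely and Σ_{d ≥ 1} μ(d)² / d^{1+u+v+2σ} · ( Σ_{ℓ1 ≥ 1, gcd(ℓ1,d)=1} μ(ℓ1)/ℓ1^{1+u+2σ} ) · ( Σ_{ℓ2 ≥ 1, gcd(ℓ2,d)=1} μ(ℓ2)/ℓ2^{1+v+2σ} ) = ∏_{p prime} ( 1 − p^{−1−u−2σ} − p^{−1−v−2σ} + p^{−1−u−v−2σ} + p^{−2−u−v−4σ} ), where the product over primes converges. -/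
section EulerAux

open ArithmeticFunction Complex

noncomputable def mterm (s : ℂ) (d l : ℕ) : ℂ :=
  if 1 ≤ l ∧ Nat.Coprime l d then (moebius l : ℂ) / (l : ℂ) ^ s else 0

lemma mterm_norm_le {s : ℂ} (d n : ℕ) : ‖mterm s d n‖ ≤ ((n : ℝ) ^ s.re)⁻¹ := by
  rcases Nat.eq_zero_or_pos n with rfl | hn
  · simp [mterm, Real.rpow_nonneg]
  unfold mterm
  split_ifs with h
  · rw [norm_div, norm_natCast_cpow_of_pos hn, div_eq_mul_inv]
    have h1 : ‖(moebius n : ℂ)‖ ≤ 1 := by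
      rw [Complex.norm_intCast]
      exact_mod_cast abs_moebius_le_one
    calc ‖(moebius n : ℂ)‖ * ((n:ℝ) ^ s.re)⁻¹ ≤ 1 * ((n:ℝ) ^ s.re)⁻¹ := by
          gcongr
      _ = ((n:ℝ) ^ s.re)⁻¹ := one_mul _
  · simp only [norm_zero]
    positivity

lemma summable_mterm_norm {s : ℂ} (hs : 1 < s.re) (d : ℕ) :
    Summable (fun n => ‖mterm s d n‖) := by
  refine Summable.of_nonneg_of_le (fun n => norm_nonneg _) (fun n => mterm_norm_le d n) ?_
  exact Real.summable_nat_rpow_inv.mpr hs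

lemma mterm_one (s : ℂ) (d : ℕ) : mterm s d 1 = 1 := by
  simp [mterm, Nat.coprime_one_left]

lemma mterm_zero (s : ℂ) (d : ℕ) : mterm s d 0 = 0 := by simp [mterm]

lemma mterm_mul {s : ℂ} (d : ℕ) {m n : ℕ} (h : Nat.Coprime m n) :
    mterm s d (m * n) = mterm s d m * mterm s d n := by
  rcases Nat.eq_zero_or_pos m with rfl | hm
  · simp [mterm_zero]
  rcases Nat.eq_zero_or_pos n with rfl | hn
  · simp [mterm_zero]
  unfold mterm
  have hcond : (1 ≤ m * n ∧ Nat.Coprime (m * n) d) ↔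
      ((1 ≤ m ∧ Nat.Coprime m d) ∧ (1 ≤ n ∧ Nat.Coprime n d)) := by
    constructor
    · rintro ⟨-, hc⟩
      exact ⟨⟨hm, Nat.Coprime.coprime_dvd_left ⟨n, rfl⟩ hc⟩,
        ⟨hn, Nat.Coprime.coprime_dvd_left ⟨m, mul_comm m n⟩ hc⟩⟩
    · rintro ⟨⟨-, h1⟩, ⟨-, h2⟩⟩
      exact ⟨Nat.one_le_iff_ne_zero.mpr (Nat.mul_ne_zero hm.ne' hn.ne'), Nat.Coprime.mul h1 h2⟩
  split_ifs with h1 h2 h3 h4 h5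
  · rw [isMultiplicative_moebius.map_mul_of_coprime h]
    push_cast
    rw [natCast_mul_natCast_cpow]
    ring
  all_goals simp_all [hcond]

lemma hasProd_mterm {s : ℂ} (hs : 1 < s.re) (d : ℕ) :
    HasProd (fun p : Nat.Primes => ∑' e : ℕ, mterm s d ((p : ℕ) ^ e)) (∑' n, mterm s d n) :=
  EulerProduct.eulerProduct_hasProd (mterm_one s d) (fun h => mterm_mul d h)
    (summable_mterm_norm hs d) (mterm_zero s d)

lemma local_mterm (s : ℂ) (d : ℕ) (p : Nat.Primes) :
    (∑' e : ℕ, mterm s d ((p : ℕ) ^ e)) =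
      if (p : ℕ) ∣ d then 1 else 1 - ((p : ℕ) : ℂ) ^ (-s) := by
  have hp : (p : ℕ).Prime := p.prop
  have h2 : ∀ e ∉ Finset.range 2, mterm s d ((p : ℕ) ^ e) = 0 := by
    intro e he
    simp only [Finset.mem_range, not_lt] at he
    unfold mterm
    split_ifs with h
    · rw [moebius_apply_prime_pow hp (by omega), if_neg (by omega)]
      simp
    · rfl
  rw [tsum_eq_sum h2]
  rw [show Finset.range 2 = {0, 1} by rfl, Finset.sum_insert (by simp),
    Finset.sum_singleton, pow_zero, pow_one, mterm_one]
  unfold mterm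
  by_cases hdvd : (p : ℕ) ∣ d
  · rw [if_neg (fun hc => (hp.coprime_iff_not_dvd.mp hc.2) hdvd), if_pos hdvd, add_zero]
  · rw [if_pos ⟨hp.one_lt.le, hp.coprime_iff_not_dvd.mpr hdvd⟩, if_neg hdvd,
      moebius_apply_prime hp, cpow_neg]
    push_cast
    ring

noncomputable def primesOf (d : ℕ) : Finset Nat.Primes :=
  d.primeFactors.attach.map
    ⟨(fun p => ⟨p.1, Nat.prime_of_mem_primeFactors p.2⟩ :
        {x // x ∈ d.primeFactors} → Nat.Primes),
      fun a b h => Subtype.ext (congrArg (Subtype.val : Nat.Primes → ℕ) h)⟩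

lemma mem_primesOf {d : ℕ} {q : Nat.Primes} : q ∈ primesOf d ↔ (q : ℕ) ∈ d.primeFactors := by
  simp only [primesOf, Finset.mem_map, Finset.mem_attach, true_and, Function.Embedding.coeFn_mk]
  constructor
  · rintro ⟨⟨a, ha⟩, rfl⟩
    exact ha
  · intro h
    exact ⟨⟨(q : ℕ), h⟩, Subtype.ext rfl⟩

noncomputable def Eul (s : ℂ) (d : ℕ) : ℂ :=
  ∏ p ∈ primesOf d, (1 - ((p : ℕ) : ℂ) ^ (-s))

lemma Eul_eq (s : ℂ) (d : ℕ) :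
    Eul s d = ∏ p ∈ d.primeFactors, (1 - (p : ℂ) ^ (-s)) := by
  rw [Eul, primesOf, Finset.prod_map]
  exact Finset.prod_attach d.primeFactors (fun n => 1 - (n : ℂ) ^ (-s))

lemma one_sub_cpow_ne_zero {s : ℂ} (hs : 1 < s.re) {p : ℕ} (hp : p.Prime) :
    1 - (p : ℂ) ^ (-s) ≠ 0 := by
  intro h
  have h1 : (p : ℂ) ^ (-s) = 1 := by linear_combination -h
  have h2 : ‖(p : ℂ) ^ (-s)‖ < 1 := by
    rw [norm_natCast_cpow_of_pos hp.pos, neg_re]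
    exact Real.rpow_lt_one_of_one_lt_of_neg (by exact_mod_cast hp.one_lt) (by linarith)
  rw [h1, norm_one] at h2
  exact lt_irrefl _ h2

lemma Eul_ne_zero {s : ℂ} (hs : 1 < s.re) (d : ℕ) : Eul s d ≠ 0 := by
  rw [Eul]
  exact Finset.prod_ne_zero_iff.mpr fun p _ => one_sub_cpow_ne_zero hs p.prop

lemma hasProd_one_sub_cpow {s : ℂ} (hs : 1 < s.re) :
    HasProd (fun p : Nat.Primes => 1 - ((p : ℕ) : ℂ) ^ (-s)) (∑' n, mterm s 1 n) := by
  have h := hasProd_mterm hs 1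
  have hfun : ∀ p : Nat.Primes, (∑' e : ℕ, mterm s 1 ((p : ℕ) ^ e))
      = 1 - ((p : ℕ) : ℂ) ^ (-s) := by
    intro p
    rw [local_mterm s 1 p, if_neg (fun hdvd => p.prop.ne_one (Nat.dvd_one.mp hdvd))]
  simpa only [hfun] using h

lemma tsum_mterm_one_eq {s : ℂ} (hs : 1 < s.re) {d : ℕ} (hd : 1 ≤ d) :
    (∑' n, mterm s 1 n) = (∑' n, mterm s d n) * Eul s d := by
  have h1 : HasProd (fun p : Nat.Primes => if (p : ℕ) ∣ d then 1 else 1 - ((p : ℕ) : ℂ) ^ (-s))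
      (∑' n, mterm s d n) := by
    have := hasProd_mterm hs d
    simpa only [local_mterm s d] using this
  have h0 : ∀ p : Nat.Primes, p ∉ primesOf d →
      (if (p : ℕ) ∣ d then 1 - ((p : ℕ) : ℂ) ^ (-s) else 1) = 1 := by
    intro p hp
    rw [if_neg]
    intro hdvd
    exact hp (mem_primesOf.mpr (Nat.mem_primeFactors.mpr ⟨p.prop, hdvd, by omega⟩))
  have hr := hasProd_prod_of_ne_finset_one (L := SummationFilter.unconditional _) h0
  have hprod : (∏ p ∈ primesOf d, if (p : ℕ) ∣ d then 1 - ((p : ℕ) : ℂ) ^ (-s) else 1)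
      = Eul s d := by
    rw [Eul]
    exact Finset.prod_congr rfl fun p hp =>
      if_pos (Nat.mem_primeFactors.mp (mem_primesOf.mp hp)).2.1
  rw [hprod] at hr
  have hmul := h1.mul hr
  have heq : (fun p : Nat.Primes =>
      (if (p : ℕ) ∣ d then 1 else 1 - ((p : ℕ) : ℂ) ^ (-s)) *
      (if (p : ℕ) ∣ d then 1 - ((p : ℕ) : ℂ) ^ (-s) else 1))
      = fun p : Nat.Primes => 1 - ((p : ℕ) : ℂ) ^ (-s) := by
    funext p
    split_ifs with h <;> ring
  rw [heq] at hmul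
  exact (hasProd_one_sub_cpow hs).unique hmul

lemma tsum_mterm_eq_LSeries (s : ℂ) :
    (∑' n, mterm s 1 n) = LSeries (fun n => (moebius n : ℂ)) s := by
  rw [LSeries]
  refine tsum_congr fun n => ?_
  rcases Nat.eq_zero_or_pos n with rfl | hn
  · simp [mterm, LSeries.term]
  · rw [mterm, if_pos ⟨hn, Nat.coprime_one_right n⟩, LSeries.term_of_ne_zero hn.ne']

lemma tsum_mterm_one_ne_zero {s : ℂ} (hs : 1 < s.re) : (∑' n, mterm s 1 n) ≠ 0 := by
  rw [tsum_mterm_eq_LSeries]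
  intro h
  have h2 := ArithmeticFunction.LSeries_zeta_mul_Lseries_moebius hs
  rw [show (fun n => ((moebius n : ℤ) : ℂ)) = fun n => ((moebius n : ℤ) : ℂ) from rfl] at h
  rw [h, mul_zero] at h2
  exact zero_ne_one h2

noncomputable def gterm (su sv suv : ℂ) (d : ℕ) : ℂ :=
  if 1 ≤ d then
    (moebius d : ℂ) ^ 2 / (d : ℂ) ^ suv * (Eul su d)⁻¹ * (Eul sv d)⁻¹ else 0

lemma Eul_one (s : ℂ) : Eul s 1 = 1 := by
  rw [Eul_eq, Nat.primeFactors_one, Finset.prod_empty]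

lemma gterm_one (su sv suv : ℂ) : gterm su sv suv 1 = 1 := by
  rw [gterm, if_pos le_rfl, Eul_one, Eul_one]
  simp

lemma gterm_zero (su sv suv : ℂ) : gterm su sv suv 0 = 0 := by simp [gterm]

lemma Eul_mul (s : ℂ) {m n : ℕ} (hm : m ≠ 0) (hn : n ≠ 0) (h : Nat.Coprime m n) :
    Eul s (m * n) = Eul s m * Eul s n := by
  rw [Eul_eq, Eul_eq, Eul_eq, Nat.primeFactors_mul hm hn,
    Finset.prod_union (Nat.Coprime.disjoint_primeFactors h)]

lemma gterm_mul (su sv suv : ℂ) {m n : ℕ} (h : Nat.Coprime m n) :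
    gterm su sv suv (m * n) = gterm su sv suv m * gterm su sv suv n := by
  rcases Nat.eq_zero_or_pos m with rfl | hm
  · simp [gterm_zero]
  rcases Nat.eq_zero_or_pos n with rfl | hn
  · simp [gterm_zero]
  rw [gterm, gterm, gterm, if_pos (Nat.one_le_iff_ne_zero.mpr hm.ne'),
    if_pos (Nat.one_le_iff_ne_zero.mpr hn.ne'),
    if_pos (Nat.one_le_iff_ne_zero.mpr (Nat.mul_ne_zero hm.ne' hn.ne')),
    isMultiplicative_moebius.map_mul_of_coprime h,
    Eul_mul su hm.ne' hn.ne' h, Eul_mul sv hm.ne' hn.ne' h]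
  push_cast
  rw [natCast_mul_natCast_cpow, mul_inv, mul_inv]
  have h1 : ((m : ℂ)) ^ suv ≠ 0 := by
    intro hc
    rw [cpow_eq_zero_iff] at hc
    exact_mod_cast hm.ne' (by exact_mod_cast hc.1)
  ring

lemma gterm_prime_pow (su sv suv : ℂ) (p : Nat.Primes) :
    (∑' e : ℕ, gterm su sv suv ((p : ℕ) ^ e)) =
      1 + ((p : ℕ) : ℂ) ^ (-suv) *
        (1 - ((p : ℕ) : ℂ) ^ (-su))⁻¹ * (1 - ((p : ℕ) : ℂ) ^ (-sv))⁻¹ := by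
  have hp : (p : ℕ).Prime := p.prop
  have h2 : ∀ e ∉ Finset.range 2, gterm su sv suv ((p : ℕ) ^ e) = 0 := by
    intro e he
    simp only [Finset.mem_range, not_lt] at he
    rw [gterm, if_pos (Nat.one_le_iff_ne_zero.mpr (pow_ne_zero _ hp.pos.ne')),
      moebius_apply_prime_pow hp (by omega), if_neg (by omega)]
    simp
  rw [tsum_eq_sum h2, show Finset.range 2 = {0, 1} by rfl, Finset.sum_insert (by simp),
    Finset.sum_singleton, pow_zero, pow_one, gterm_one]
  congr 1
  rw [gterm, if_pos hp.one_lt.le, moebius_apply_prime hp, Eul_eq, Eul_eq,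
    hp.primeFactors, Finset.prod_singleton, Finset.prod_singleton]
  simp only [cpow_neg]
  push_cast
  ring

noncomputable def Fterm (su sv suv : ℂ) (d : ℕ) : ℂ :=
  if 1 ≤ d then
    (moebius d : ℂ) ^ 2 / (d : ℂ) ^ suv * (∑' l, mterm su d l) * (∑' l, mterm sv d l)
  else 0

lemma norm_tsum_mterm_le {s : ℂ} (hs : 1 < s.re) (d : ℕ) :
    ‖∑' n, mterm s d n‖ ≤ ∑' n : ℕ, ((n : ℝ) ^ s.re)⁻¹ :=
  (norm_tsum_le_tsum_norm (summable_mterm_norm hs d)).trans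
    (Summable.tsum_le_tsum (mterm_norm_le d) (summable_mterm_norm hs d)
      (Real.summable_nat_rpow_inv.mpr hs))

lemma Fterm_eq {su sv suv : ℂ} (hsu : 1 < su.re) (hsv : 1 < sv.re) (d : ℕ) :
    Fterm su sv suv d =
      (∑' n, mterm su 1 n) * (∑' n, mterm sv 1 n) * gterm su sv suv d := by
  rcases Nat.eq_zero_or_pos d with rfl | hd
  · simp [Fterm, gterm_zero]
  have hAu : (∑' n, mterm su d n) = (∑' n, mterm su 1 n) * (Eul su d)⁻¹ := by
    rw [tsum_mterm_one_eq hsu hd, mul_assoc, mul_inv_cancel₀ (Eul_ne_zero hsu d), mul_one]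
  have hAv : (∑' n, mterm sv d n) = (∑' n, mterm sv 1 n) * (Eul sv d)⁻¹ := by
    rw [tsum_mterm_one_eq hsv hd, mul_assoc, mul_inv_cancel₀ (Eul_ne_zero hsv d), mul_one]
  have hd1 : 1 ≤ d := hd
  rw [Fterm, gterm, if_pos hd1, if_pos hd1, hAu, hAv]
  ring

lemma norm_moebius_sq_div_le {s : ℂ} (d : ℕ) :
    ‖(moebius d : ℂ) ^ 2 / (d : ℂ) ^ s‖ ≤ ((d : ℝ) ^ s.re)⁻¹ := by
  rcases Nat.eq_zero_or_pos d with rfl | hd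
  · simp [Real.rpow_nonneg]
  rw [norm_div, norm_natCast_cpow_of_pos hd, div_eq_mul_inv, norm_pow]
  have h1 : ‖(moebius d : ℂ)‖ ≤ 1 := by
    rw [Complex.norm_intCast]
    exact_mod_cast abs_moebius_le_one
  have h2 : ‖(moebius d : ℂ)‖ ^ 2 ≤ 1 := by
    calc ‖(moebius d : ℂ)‖ ^ 2 ≤ 1 ^ 2 := pow_le_pow_left₀ (norm_nonneg _) h1 2
      _ = 1 := one_pow 2
  calc ‖(moebius d : ℂ)‖ ^ 2 * ((d : ℝ) ^ s.re)⁻¹ ≤ 1 * ((d : ℝ) ^ s.re)⁻¹ :=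
        mul_le_mul_of_nonneg_right h2 (by positivity)
    _ = ((d : ℝ) ^ s.re)⁻¹ := one_mul _

lemma summable_Fterm_norm {su sv suv : ℂ} (hsu : 1 < su.re) (hsv : 1 < sv.re)
    (hsuv : 1 < suv.re) : Summable (fun d => ‖Fterm su sv suv d‖) := by
  set Mu := ∑' n : ℕ, ((n : ℝ) ^ su.re)⁻¹ with hMu
  set Mv := ∑' n : ℕ, ((n : ℝ) ^ sv.re)⁻¹ with hMv
  have hMu0 : 0 ≤ Mu := tsum_nonneg fun n => by positivity
  have hMv0 : 0 ≤ Mv := tsum_nonneg fun n => by positivity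
  refine Summable.of_nonneg_of_le (fun _ => norm_nonneg _) (fun d => ?_)
    (((Real.summable_nat_rpow_inv.mpr hsuv).mul_left (Mu * Mv)))
  rcases Nat.eq_zero_or_pos d with rfl | hd
  · simp only [Fterm, if_neg (by omega : ¬ (1 ≤ 0)), norm_zero]
    positivity
  have hd1 : 1 ≤ d := hd
  rw [Fterm, if_pos hd1, norm_mul, norm_mul]
  calc ‖(moebius d : ℂ) ^ 2 / (d : ℂ) ^ suv‖ * ‖∑' l, mterm su d l‖ * ‖∑' l, mterm sv d l‖
      ≤ ((d : ℝ) ^ suv.re)⁻¹ * Mu * Mv := by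
        gcongr
        · exact norm_moebius_sq_div_le d
        · exact norm_tsum_mterm_le hsu d
        · exact norm_tsum_mterm_le hsv d
    _ = Mu * Mv * ((d : ℝ) ^ suv.re)⁻¹ := by ring

lemma summable_gterm_norm {su sv suv : ℂ} (hsu : 1 < su.re) (hsv : 1 < sv.re)
    (hsuv : 1 < suv.re) : Summable (fun d => ‖gterm su sv suv d‖) := by
  have hu0 := tsum_mterm_one_ne_zero hsu
  have hv0 := tsum_mterm_one_ne_zero hsv
  have key : ∀ d, ‖gterm su sv suv d‖ =
      ‖Fterm su sv suv d‖ * (‖∑' n, mterm su 1 n‖⁻¹ * ‖∑' n, mterm sv 1 n‖⁻¹) := by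
    intro d
    have ha : ‖∑' n, mterm su 1 n‖ ≠ 0 := norm_ne_zero_iff.mpr hu0
    have hb : ‖∑' n, mterm sv 1 n‖ ≠ 0 := norm_ne_zero_iff.mpr hv0
    rw [Fterm_eq hsu hsv d, norm_mul, norm_mul]
    field_simp
  exact ((summable_Fterm_norm hsu hsv hsuv).mul_right _).congr fun d => (key d).symm

lemma hasProd_gterm {su sv suv : ℂ} (hsu : 1 < su.re) (hsv : 1 < sv.re) (hsuv : 1 < suv.re) :
    HasProd (fun p : Nat.Primes =>
      1 + ((p : ℕ) : ℂ) ^ (-suv) *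
        (1 - ((p : ℕ) : ℂ) ^ (-su))⁻¹ * (1 - ((p : ℕ) : ℂ) ^ (-sv))⁻¹)
      (∑' d, gterm su sv suv d) := by
  have h := EulerProduct.eulerProduct_hasProd (gterm_one su sv suv)
    (fun hc => gterm_mul su sv suv hc) (summable_gterm_norm hsu hsv hsuv)
    (gterm_zero su sv suv)
  simpa only [gterm_prime_pow] using h

end EulerAux

/-- The Dirichlet series `G₁(u,v;σ)` factors as an Euler product:
`Σ_d μ(d)²/d^{1+u+v+2σ} (Σ_{(ℓ₁,d)=1} μ(ℓ₁)/ℓ₁^{1+u+2σ}) (Σ_{(ℓ₂,d)=1} μ(ℓ₂)/ℓ₂^{1+v+2σ})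
  = ∏_p (1 − p^{−1−u−2σ} − p^{−1−v−2σ} + p^{−1−u−v−2σ} + p^{−2−u−v−4σ})`. -/
theorem euler_product_G1 (u v : ℂ) (σ : ℝ)
    (hu : 0 < u.re + 2 * σ) (hv : 0 < v.re + 2 * σ)
    (huv : 0 < u.re + v.re + 2 * σ) :
    (∀ d : ℕ, Summable (fun l1 : ℕ =>
        ‖if 1 ≤ l1 ∧ Nat.Coprime l1 d then
            (ArithmeticFunction.moebius l1 : ℂ) / (l1 : ℂ) ^ (1 + u + 2 * (σ : ℂ))
          else 0‖)) ∧
    (∀ d : ℕ, Summable (fun l2 : ℕ =>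
        ‖if 1 ≤ l2 ∧ Nat.Coprime l2 d then
            (ArithmeticFunction.moebius l2 : ℂ) / (l2 : ℂ) ^ (1 + v + 2 * (σ : ℂ))
          else 0‖)) ∧
    Summable (fun d : ℕ =>
      ‖if 1 ≤ d then
          (ArithmeticFunction.moebius d : ℂ) ^ 2 / (d : ℂ) ^ (1 + u + v + 2 * (σ : ℂ)) *
          (∑' l1 : ℕ, if 1 ≤ l1 ∧ Nat.Coprime l1 d then
              (ArithmeticFunction.moebius l1 : ℂ) / (l1 : ℂ) ^ (1 + u + 2 * (σ : ℂ)) else 0) *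
          (∑' l2 : ℕ, if 1 ≤ l2 ∧ Nat.Coprime l2 d then
              (ArithmeticFunction.moebius l2 : ℂ) / (l2 : ℂ) ^ (1 + v + 2 * (σ : ℂ)) else 0)
        else 0‖) ∧
    Multipliable (fun p : Nat.Primes =>
      1 - ((p : ℕ) : ℂ) ^ (-1 - u - 2 * (σ : ℂ)) - ((p : ℕ) : ℂ) ^ (-1 - v - 2 * (σ : ℂ))
        + ((p : ℕ) : ℂ) ^ (-1 - u - v - 2 * (σ : ℂ))
        + ((p : ℕ) : ℂ) ^ (-2 - u - v - 4 * (σ : ℂ))) ∧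
    (∑' d : ℕ, if 1 ≤ d then
        (ArithmeticFunction.moebius d : ℂ) ^ 2 / (d : ℂ) ^ (1 + u + v + 2 * (σ : ℂ)) *
        (∑' l1 : ℕ, if 1 ≤ l1 ∧ Nat.Coprime l1 d then
            (ArithmeticFunction.moebius l1 : ℂ) / (l1 : ℂ) ^ (1 + u + 2 * (σ : ℂ)) else 0) *
        (∑' l2 : ℕ, if 1 ≤ l2 ∧ Nat.Coprime l2 d then
            (ArithmeticFunction.moebius l2 : ℂ) / (l2 : ℂ) ^ (1 + v + 2 * (σ : ℂ)) else 0)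
      else 0)
    = ∏' p : Nat.Primes,
        (1 - ((p : ℕ) : ℂ) ^ (-1 - u - 2 * (σ : ℂ)) - ((p : ℕ) : ℂ) ^ (-1 - v - 2 * (σ : ℂ))
          + ((p : ℕ) : ℂ) ^ (-1 - u - v - 2 * (σ : ℂ))
          + ((p : ℕ) : ℂ) ^ (-2 - u - v - 4 * (σ : ℂ))) := by
  have hre : ∀ w : ℂ, (w + 2 * (σ : ℂ)).re = w.re + 2 * σ := by
    intro w
    simp [Complex.add_re, Complex.mul_re]
  have hsu : 1 < (1 + u + 2 * (σ : ℂ)).re := by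
    rw [add_assoc, Complex.add_re, Complex.one_re, hre]
    linarith
  have hsv : 1 < (1 + v + 2 * (σ : ℂ)).re := by
    rw [add_assoc, Complex.add_re, Complex.one_re, hre]
    linarith
  have hsuv : 1 < (1 + u + v + 2 * (σ : ℂ)).re := by
    rw [add_assoc, add_assoc, Complex.add_re, Complex.one_re, Complex.add_re, hre]
    linarith
  have hPu := hasProd_one_sub_cpow hsu
  have hPv := hasProd_one_sub_cpow hsv
  have hPg := hasProd_gterm hsu hsv hsuv
  have hbig := (hPu.mul hPv).mul hPg
  have heq : (fun p : Nat.Primes =>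
      (1 - ((p : ℕ) : ℂ) ^ (-(1 + u + 2 * (σ : ℂ)))) *
        (1 - ((p : ℕ) : ℂ) ^ (-(1 + v + 2 * (σ : ℂ)))) *
      (1 + ((p : ℕ) : ℂ) ^ (-(1 + u + v + 2 * (σ : ℂ))) *
        (1 - ((p : ℕ) : ℂ) ^ (-(1 + u + 2 * (σ : ℂ))))⁻¹ *
        (1 - ((p : ℕ) : ℂ) ^ (-(1 + v + 2 * (σ : ℂ))))⁻¹))
      = fun p : Nat.Primes =>
        1 - ((p : ℕ) : ℂ) ^ (-1 - u - 2 * (σ : ℂ)) - ((p : ℕ) : ℂ) ^ (-1 - v - 2 * (σ : ℂ))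
          + ((p : ℕ) : ℂ) ^ (-1 - u - v - 2 * (σ : ℂ))
          + ((p : ℕ) : ℂ) ^ (-2 - u - v - 4 * (σ : ℂ)) := by
    funext p
    have hp0 : ((p : ℕ) : ℂ) ≠ 0 := Nat.cast_ne_zero.mpr p.prop.pos.ne'
    have hx := one_sub_cpow_ne_zero hsu p.prop
    have hy := one_sub_cpow_ne_zero hsv p.prop
    rw [show (-1 - u - 2 * (σ : ℂ)) = -(1 + u + 2 * (σ : ℂ)) by ring,
      show (-1 - v - 2 * (σ : ℂ)) = -(1 + v + 2 * (σ : ℂ)) by ring,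
      show (-1 - u - v - 2 * (σ : ℂ)) = -(1 + u + v + 2 * (σ : ℂ)) by ring,
      show (-2 - u - v - 4 * (σ : ℂ))
        = -(1 + u + 2 * (σ : ℂ)) + -(1 + v + 2 * (σ : ℂ)) by ring,
      Complex.cpow_add _ _ hp0]
    generalize hX : ((p : ℕ) : ℂ) ^ (-(1 + u + 2 * (σ : ℂ))) = x at hx ⊢
    generalize hY : ((p : ℕ) : ℂ) ^ (-(1 + v + 2 * (σ : ℂ))) = y at hy ⊢
    generalize hZ : ((p : ℕ) : ℂ) ^ (-(1 + u + v + 2 * (σ : ℂ))) = z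
    field_simp
    ring
  rw [heq] at hbig
  refine ⟨fun d => summable_mterm_norm hsu d, fun d => summable_mterm_norm hsv d,
    summable_Fterm_norm hsu hsv hsuv, hbig.multipliable, ?_⟩
  show (∑' d, Fterm (1 + u + 2 * (σ : ℂ)) (1 + v + 2 * (σ : ℂ)) (1 + u + v + 2 * (σ : ℂ)) d)
    = _
  rw [tsum_congr fun d => (Fterm_eq hsu hsv d).trans (mul_assoc _ _ _), tsum_mul_left,
    tsum_mul_left, ← mul_assoc]
  exact hbig.tprod_eq.symm
end

section
/- Fix constants 0 < c1 < c2. There exist constants C > 0 and T0 > 0 (depending only on c1, c2) such that for all T ≥ T0, all real σ with 0 < σ ≤ 1/2, all real τ with |τ| ≤ T^{1/4}, and all μ = (μ1, μ2, μ3) ∈ (iℝ)³ with μ1+μ2+μ3 = 0 and c1·T ≤ |μ_k| ≤ c2·T for each k, one has | ∏_{k=1}^{3} [Γ((1/2−σ+iτ−μ_k)/2) / Γ((1/2+σ+iτ−μ_k)/2)] · [Γ((1/2−σ−iτ+μ_k)/2) / Γ((1/2+σ−iτ+μ_k)/2)] − (|μ1|²|μ2|²|μ3|²/64)^{−σ}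 | ≤ C · T^{−6σ−3/4}. (Note that since each μ_k is purely imaginary, −μ1²μ2²μ3²/64 = |μ1|²|μ2|²|μ3|²/64 is a positive real number, and the power is the real power.) -/
open Complex Filter Finset

namespace GammaRatioAux

lemma hasDerivAt_g (y : ℝ) (hy : y ≠ 0) (u : ℝ) :
    HasDerivAt (fun u : ℝ => Real.log (u ^ 2 + y ^ 2)) (2 * u / (u ^ 2 + y ^ 2)) u := by
  have h : u ^ 2 + y ^ 2 ≠ 0 := by positivity
  have h1 : HasDerivAt (fun u : ℝ => u ^ 2 + y ^ 2) (2 * u) u := by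
    simpa using (hasDerivAt_pow 2 u).add_const (y ^ 2)
  simpa using h1.log h

lemma osc (y j a b : ℝ) (hy : y ≠ 0) (hj : 0 ≤ j) (ha : j ≤ a) (ha2 : a ≤ j + 2)
    (hb : j ≤ b) (hb2 : b ≤ j + 2) :
    |2 * a / (a ^ 2 + y ^ 2) - 2 * b / (b ^ 2 + y ^ 2)| ≤ 4 / (j ^ 2 + y ^ 2) := by
  have hA : (0:ℝ) < a ^ 2 + y ^ 2 := by positivity
  have hB : (0:ℝ) < b ^ 2 + y ^ 2 := by positivity
  have hJ : (0:ℝ) < j ^ 2 + y ^ 2 := by positivity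
  have hab : j ^ 2 ≤ a * b := by nlinarith
  have hab0 : 0 ≤ a * b := by nlinarith
  have key : 2 * a / (a ^ 2 + y ^ 2) - 2 * b / (b ^ 2 + y ^ 2)
      = 2 * (a - b) * (y ^ 2 - a * b) / ((a ^ 2 + y ^ 2) * (b ^ 2 + y ^ 2)) := by
    field_simp; ring
  rw [key, abs_div, abs_of_pos (show (0:ℝ) < (a ^ 2 + y ^ 2) * (b ^ 2 + y ^ 2) by positivity),
    div_le_div_iff₀ (by positivity) hJ]
  have hd : |a - b| ≤ 2 := abs_le.2 ⟨by linarith, by linarith⟩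
  have h2 : |y ^ 2 - a * b| ≤ a * b + y ^ 2 := abs_le.2 ⟨by nlinarith, by nlinarith⟩
  have h1 : |2 * (a - b) * (y ^ 2 - a * b)| ≤ 4 * (a * b + y ^ 2) := by
    rw [abs_mul, abs_mul, _root_.abs_two]
    nlinarith [abs_nonneg (a - b), abs_nonneg (y ^ 2 - a * b)]
  have h3 : (a * b + y ^ 2) * (j ^ 2 + y ^ 2) ≤ (a ^ 2 + y ^ 2) * (b ^ 2 + y ^ 2) := by
    nlinarith [sq_nonneg (a - b), sq_nonneg (a*b - y^2)]
  calc |2 * (a - b) * (y ^ 2 - a * b)| * (j ^ 2 + y ^ 2) ≤ (4 * (a * b + y ^ 2)) * (j ^ 2 + y ^ 2) :=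
        mul_le_mul_of_nonneg_right h1 hJ.le
    _ ≤ 4 * ((a ^ 2 + y ^ 2) * (b ^ 2 + y ^ 2)) := by nlinarith [h3]


-- MVT: slope equals derivative at interior point
lemma slope_g (y : ℝ) (hy : y ≠ 0) {a b : ℝ} (hab : a < b) :
    ∃ c ∈ Set.Ioo a b,
      Real.log (b ^ 2 + y ^ 2) - Real.log (a ^ 2 + y ^ 2) = (b - a) * (2 * c / (c ^ 2 + y ^ 2)) := by
  obtain ⟨c, hc, hc2⟩ := exists_hasDerivAt_eq_slope (fun u : ℝ => Real.log (u ^ 2 + y ^ 2))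
    (fun u => 2 * u / (u ^ 2 + y ^ 2)) hab
    (fun u _ => (hasDerivAt_g y hy u).continuousAt.continuousWithinAt)
    (fun u _ => hasDerivAt_g y hy u)
  exact ⟨c, hc, by field_simp [sub_ne_zero.2 hab.ne'] at hc2 ⊢; linarith [hc2]⟩

lemma per_j (y x s : ℝ) (hy : y ≠ 0) (hx0 : 0 ≤ x) (hxs : x + s ≤ 2) (hs : 0 < s) (j : ℕ) :
    |(Real.log ((x + s + j) ^ 2 + y ^ 2) - Real.log ((x + j) ^ 2 + y ^ 2))
      - s * (Real.log (((j : ℝ) + 1) ^ 2 + y ^ 2) - Real.log ((j : ℝ) ^ 2 + y ^ 2))|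
      ≤ 4 * s / ((j : ℝ) ^ 2 + y ^ 2) := by
  have hj : (0:ℝ) ≤ (j : ℝ) := Nat.cast_nonneg j
  obtain ⟨ξ, hξ, hξ2⟩ := slope_g y hy (show x + (j:ℝ) < x + s + j by linarith)
  obtain ⟨η, hη, hη2⟩ := slope_g y hy (show (j:ℝ) < (j:ℝ) + 1 by linarith)
  have e1 : Real.log ((x + s + j) ^ 2 + y ^ 2) - Real.log ((x + j) ^ 2 + y ^ 2)
      = s * (2 * ξ / (ξ ^ 2 + y ^ 2)) := by
    have : x + s + (j:ℝ) - (x + j) = s := by ring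
    rw [hξ2, this]
  have e2 : Real.log (((j:ℝ) + 1) ^ 2 + y ^ 2) - Real.log ((j : ℝ) ^ 2 + y ^ 2)
      = 2 * η / (η ^ 2 + y ^ 2) := by
    rw [hη2]; ring
  rw [e1, e2, ← mul_sub, abs_mul, abs_of_pos hs]
  rw [show 4 * s / ((j : ℝ) ^ 2 + y ^ 2) = s * (4 / ((j:ℝ) ^ 2 + y ^ 2)) by ring]
  refine mul_le_mul_of_nonneg_left ?_ hs.le
  exact osc y j ξ η hy hj (by linarith [hξ.1]) (by linarith [hξ.2]) (by linarith [hη.1])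
    (by linarith [hη.2])

lemma sum_bound (y : ℝ) (hy : 1 ≤ |y|) (n : ℕ) :
    ∑ j ∈ Finset.range (n + 1), 4 / ((j : ℝ) ^ 2 + y ^ 2) ≤ 12 / |y| := by
  set w := |y| with hw
  have hw1 : 1 ≤ w := hy
  have hw0 : 0 < w := by linarith
  have hysq : y ^ 2 = w ^ 2 := (_root_.sq_abs y).symm
  rw [Finset.sum_range_succ']
  have h0 : 4 / (((0:ℕ) : ℝ) ^ 2 + y ^ 2) ≤ 4 / w := by
    rw [hysq]
    simp only [Nat.cast_zero]
    rw [zero_pow (by norm_num), zero_add]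
    apply div_le_div_of_nonneg_left (by norm_num) hw0
    nlinarith
  have hterm : ∀ i : ℕ, 4 / ((((i:ℕ)+1 : ℕ) : ℝ) ^ 2 + y ^ 2)
      ≤ 8 / ((i:ℝ) + w) - 8 / (((i:ℝ) + 1) + w) := by
    intro i
    have hi : (0:ℝ) ≤ (i:ℝ) := Nat.cast_nonneg i
    have h1 : (0:ℝ) < (i:ℝ) + w := by linarith
    have h2 : (0:ℝ) < ((i:ℝ) + 1) + w := by linarith
    have key : 8 / ((i:ℝ) + w) - 8 / (((i:ℝ) + 1) + w) = 8 / (((i:ℝ) + w) * (((i:ℝ) + 1) + w)) := by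
      field_simp; ring
    rw [key, hysq]
    push_cast
    rw [div_le_div_iff₀ (by positivity) (by positivity)]
    nlinarith [sq_nonneg ((i:ℝ) - w), sq_nonneg ((i:ℝ) + 1 - w)]
  have htel : ∑ i ∈ Finset.range n, (8 / ((i:ℝ) + w) - 8 / (((i:ℝ) + 1) + w))
      = 8 / w - 8 / ((n:ℝ) + w) := by
    have := Finset.sum_range_sub' (fun i : ℕ => 8 / ((i:ℝ) + w)) n
    simpa using this
  have hsum : ∑ i ∈ Finset.range n, 4 / ((((i:ℕ)+1 : ℕ) : ℝ) ^ 2 + y ^ 2) ≤ 8 / w := by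
    calc ∑ i ∈ Finset.range n, 4 / ((((i:ℕ)+1 : ℕ) : ℝ) ^ 2 + y ^ 2)
        ≤ ∑ i ∈ Finset.range n, (8 / ((i:ℝ) + w) - 8 / (((i:ℝ) + 1) + w)) :=
          Finset.sum_le_sum fun i _ => hterm i
      _ = 8 / w - 8 / ((n:ℝ) + w) := htel
      _ ≤ 8 / w := by
          have : (0:ℝ) ≤ 8 / ((n:ℝ) + w) := by positivity
          linarith
  have : (12:ℝ) / w = 8 / w + 4 / w := by ring
  rw [this]
  exact add_le_add hsum h0


-- norm squared of GammaSeq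
lemma normSq_gammaSeq (z : ℂ) (n : ℕ) (hn : 1 ≤ n) :
    ‖Complex.GammaSeq z n‖ ^ 2 = Real.exp (2 * z.re * Real.log n) * ((n.factorial : ℝ)) ^ 2
      / ∏ j ∈ Finset.range (n + 1), ((z.re + j) ^ 2 + z.im ^ 2) := by
  have hn0 : (0:ℝ) < (n:ℝ) := by exact_mod_cast hn
  rw [Complex.GammaSeq]
  rw [norm_div, norm_mul, div_pow, mul_pow, norm_prod]
  congr 1
  · congr 1
    · have : ((n:ℂ) : ℂ) ^ z = (((n:ℝ) : ℂ)) ^ z := by norm_num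
      rw [this, Complex.norm_cpow_eq_rpow_re_of_pos hn0 z,
        Real.rpow_def_of_pos hn0]
      rw [← Real.exp_nat_mul]
      push_cast
      ring_nf
    · simp [Complex.norm_natCast]
  · rw [← Finset.prod_pow]
    apply Finset.prod_congr rfl
    intro j _
    rw [Complex.sq_norm, Complex.normSq_apply]
    simp [Complex.add_re, Complex.add_im]
    ring


lemma ratio_eq (z : ℂ) (s : ℝ) (hy : z.im ≠ 0) (n : ℕ) (hn : 1 ≤ n) :
    ‖Complex.GammaSeq z n / Complex.GammaSeq (z + (s:ℂ)) n‖ ^ 2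
      = Real.exp (-(2*s) * Real.log n
          + ∑ j ∈ Finset.range (n+1),
            (Real.log ((z.re + s + j)^2 + z.im^2) - Real.log ((z.re + j)^2 + z.im^2))) := by
  have hx : (z + (s:ℂ)).re = z.re + s := by simp
  have him : (z + (s:ℂ)).im = z.im := by simp
  have hP1 : 0 < ∏ j ∈ Finset.range (n+1), ((z.re + j)^2 + z.im^2) :=
    Finset.prod_pos fun j _ => by positivity
  have hP2 : 0 < ∏ j ∈ Finset.range (n+1), ((z.re + s + j)^2 + z.im^2) :=
    Finset.prod_pos fun j _ => by positivity
  have hF : (0:ℝ) < ((n.factorial : ℝ)) ^ 2 := by positivity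
  have hprod : Real.exp (∑ j ∈ Finset.range (n+1),
        (Real.log ((z.re + s + j)^2 + z.im^2) - Real.log ((z.re + j)^2 + z.im^2)))
      = (∏ j ∈ Finset.range (n+1), ((z.re + s + j)^2 + z.im^2))
        / (∏ j ∈ Finset.range (n+1), ((z.re + j)^2 + z.im^2)) := by
    rw [Real.exp_sum, ← Finset.prod_div_distrib]
    exact Finset.prod_congr rfl fun j _ => by
      rw [Real.exp_sub, Real.exp_log (by positivity), Real.exp_log (by positivity)]
  rw [norm_div, div_pow, normSq_gammaSeq z n hn, normSq_gammaSeq (z + (s:ℂ)) n hn, hx, him,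
    Real.exp_add, hprod]
  have hee : Real.exp (-(2*s) * Real.log n)
      = Real.exp (2 * z.re * Real.log n) / Real.exp (2 * (z.re + s) * Real.log n) := by
    rw [← Real.exp_sub]; congr 1; ring
  rw [hee]
  field_simp

lemma lemA (z : ℂ) (s : ℝ) (hx0 : 0 ≤ z.re) (hxs : z.re + s ≤ 2) (hs : 0 < s)
    (hy : 1 ≤ |z.im|) :
    |Real.log (‖Complex.Gamma z / Complex.Gamma (z + (s:ℂ))‖ ^ 2) + s * Real.log (z.im ^ 2)|
      ≤ 12 * s / |z.im| := by
  have hy0 : z.im ≠ 0 := by intro h; rw [h] at hy; simp at hy; linarith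
  have hΓ1 : Complex.Gamma z ≠ 0 := by
    apply Complex.Gamma_ne_zero
    intro m h
    apply hy0; rw [h]; simp
  have hΓ2 : Complex.Gamma (z + (s:ℂ)) ≠ 0 := by
    apply Complex.Gamma_ne_zero
    intro m h
    apply hy0
    have := congrArg Complex.im h
    simpa using this
  set R : ℝ := ‖Complex.Gamma z / Complex.Gamma (z + (s:ℂ))‖ ^ 2 with hRdef
  have hR : 0 < R := by
    apply pow_pos
    rw [norm_pos_iff]
    exact div_ne_zero hΓ1 hΓ2
  set x := z.re
  set y := z.im
  set L : ℕ → ℝ := fun n => -(2*s) * Real.log n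
      + ∑ j ∈ Finset.range (n+1),
        (Real.log ((x + s + j)^2 + y^2) - Real.log ((x + j)^2 + y^2)) with hLdef
  have t1 : Tendsto (fun n => Complex.GammaSeq z n / Complex.GammaSeq (z + (s:ℂ)) n) atTop
      (nhds (Complex.Gamma z / Complex.Gamma (z + (s:ℂ)))) :=
    (Complex.GammaSeq_tendsto_Gamma z).div (Complex.GammaSeq_tendsto_Gamma (z + (s:ℂ))) hΓ2
  have t3 : Tendsto (fun n => Real.log
      (‖Complex.GammaSeq z n / Complex.GammaSeq (z + (s:ℂ)) n‖ ^ 2)) atTop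
      (nhds (Real.log R)) := ((t1.norm).pow 2).log hR.ne'
  have t4 : Tendsto L atTop (nhds (Real.log R)) := by
    apply t3.congr'
    filter_upwards [eventually_ge_atTop 1] with n hn
    rw [ratio_eq z s hy0 n hn, Real.log_exp]
  set cn : ℕ → ℝ := fun n => s * (Real.log (((n:ℝ)+1)^2 + y^2) - 2 * Real.log n) with hcndef
  have t5 : Tendsto cn atTop (nhds 0) := by
    have h : Tendsto (fun n : ℕ => 1/(n:ℝ)) atTop (nhds 0) := tendsto_one_div_atTop_nhds_zero_nat
    have hA : Tendsto (fun n : ℕ => (1 + 1/(n:ℝ))^2) atTop (nhds 1) := by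
      have h' : Tendsto (fun n : ℕ => 1 + 1/(n:ℝ)) atTop (nhds 1) := by
        simpa using h.const_add 1
      simpa using h'.pow 2
    have hB : Tendsto (fun n : ℕ => y^2 * (1/(n:ℝ))^2) atTop (nhds 0) := by
      have := (h.pow 2).const_mul (y^2)
      simpa using this
    have h2 : Tendsto (fun n : ℕ => (1 + 1/(n:ℝ))^2 + y^2 * (1/(n:ℝ))^2) atTop (nhds 1) := by
      have := hA.add hB
      simpa using this
    have h3 : Tendsto (fun n : ℕ => Real.log ((1 + 1/(n:ℝ))^2 + y^2 * (1/(n:ℝ))^2)) atTop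
        (nhds 0) := by
      have := h2.log one_ne_zero
      simpa using this
    have h4 := h3.const_mul s
    rw [mul_zero] at h4
    apply h4.congr'
    filter_upwards [eventually_ge_atTop 1] with n hn
    have hn0 : (0:ℝ) < (n:ℝ) := by exact_mod_cast hn
    have e1 : (1 + 1/(n:ℝ))^2 + y^2 * (1/(n:ℝ))^2 = (((n:ℝ)+1)^2 + y^2) / (n:ℝ)^2 := by
      field_simp
      try ring
    rw [e1, Real.log_div (by positivity) (by positivity), Real.log_pow]
    push_cast
    try ring
  have key : ∀ n : ℕ, |L n + s * Real.log (y^2) - cn n| ≤ 12 * s / |y| := by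
    intro n
    have htel : ∑ j ∈ Finset.range (n+1),
        (s * (Real.log (((j:ℝ)+1)^2 + y^2) - Real.log ((j:ℝ)^2 + y^2)))
        = s * (Real.log (((n:ℝ)+1)^2 + y^2) - Real.log ((0:ℝ)^2 + y^2)) := by
      rw [← Finset.mul_sum]
      congr 1
      have := Finset.sum_range_sub (fun j : ℕ => Real.log ((j:ℝ)^2 + y^2)) (n+1)
      push_cast at this ⊢
      rw [this]
    have hsub : ∑ j ∈ Finset.range (n+1),
          ((Real.log ((x + s + j)^2 + y^2) - Real.log ((x + j)^2 + y^2))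
            - s * (Real.log (((j:ℝ)+1)^2 + y^2) - Real.log ((j:ℝ)^2 + y^2)))
        = (∑ j ∈ Finset.range (n+1),
            (Real.log ((x + s + j)^2 + y^2) - Real.log ((x + j)^2 + y^2)))
          - ∑ j ∈ Finset.range (n+1),
            (s * (Real.log (((j:ℝ)+1)^2 + y^2) - Real.log ((j:ℝ)^2 + y^2))) :=
      Finset.sum_sub_distrib _ _
    have e2 : L n + s * Real.log (y^2) - cn n
        = ∑ j ∈ Finset.range (n+1),
          ((Real.log ((x + s + j)^2 + y^2) - Real.log ((x + j)^2 + y^2))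
            - s * (Real.log (((j:ℝ)+1)^2 + y^2) - Real.log ((j:ℝ)^2 + y^2))) := by
      rw [hsub, htel]
      simp only [hLdef, hcndef]
      have h00 : (0:ℝ)^2 + y^2 = y^2 := by ring
      rw [h00]
      ring
    rw [e2]
    calc |∑ j ∈ Finset.range (n+1),
          ((Real.log ((x + s + j)^2 + y^2) - Real.log ((x + j)^2 + y^2))
            - s * (Real.log (((j:ℝ)+1)^2 + y^2) - Real.log ((j:ℝ)^2 + y^2)))|
        ≤ ∑ j ∈ Finset.range (n+1), (4 * s / ((j:ℝ)^2 + y^2)) := by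
          refine (Finset.abs_sum_le_sum_abs _ _).trans (Finset.sum_le_sum fun j _ => ?_)
          exact per_j y x s hy0 hx0 hxs hs j
      _ = s * ∑ j ∈ Finset.range (n+1), (4 / ((j:ℝ)^2 + y^2)) := by
          rw [Finset.mul_sum]
          exact Finset.sum_congr rfl fun j _ => by ring
      _ ≤ s * (12 / |y|) := by
          exact mul_le_mul_of_nonneg_left (sum_bound y hy n) hs.le
      _ = 12 * s / |y| := by ring
  have t6 : Tendsto (fun n => L n + s * Real.log (y^2) - cn n) atTop
      (nhds (Real.log R + s * Real.log (y^2))) := by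
    have t6' := (t4.add_const (s * Real.log (y^2))).sub t5
    rwa [sub_zero] at t6'
  exact le_of_tendsto t6.abs (Eventually.of_forall key)




lemma abs_log_near_one {r d : ℝ} (hd0 : 0 ≤ d) (hd : d ≤ 1/2) (h1 : 1 - d ≤ r)
    (h2 : r ≤ 1 + d) : |Real.log r| ≤ 2 * d := by
  have hr : 0 < r := by linarith
  have h0 : (0:ℝ) < 1 - d := by linarith
  rw [abs_le]
  constructor
  · have hl : Real.log (1 - d) ≤ Real.log r := Real.log_le_log h0 h1
    have hinv : Real.log (1 - d)⁻¹ ≤ (1 - d)⁻¹ - 1 :=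
      Real.log_le_sub_one_of_pos (inv_pos.2 h0)
    rw [Real.log_inv] at hinv
    have hb : (1 - d)⁻¹ ≤ 1 + 2 * d := by
      rw [inv_eq_one_div, div_le_iff₀ h0]
      nlinarith
    linarith
  · have hl : Real.log r ≤ Real.log (1 + d) := Real.log_le_log hr h2
    have := Real.log_le_sub_one_of_pos (show (0:ℝ) < 1 + d by linarith)
    linarith

end GammaRatioAux

open Complex GammaRatioAux Finset

set_option maxHeartbeats 1000000 in
/-- The Gamma-factor ratio appearing in the diagonal term equals
`(|μ₁|²|μ₂|²|μ₃|²/64)^{-σ} + O(T^{-6σ-3/4})`. -/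
theorem gamma_ratio_asymptotic (c1 c2 : ℝ) (hc1 : 0 < c1) (hc12 : c1 < c2) :
    ∃ C > (0 : ℝ), ∃ T0 > (0 : ℝ), ∀ T : ℝ, T0 ≤ T →
      ∀ σ τ : ℝ, 0 < σ → σ ≤ 1 / 2 → |τ| ≤ T ^ ((1 : ℝ) / 4) →
      ∀ μ : Fin 3 → ℂ, (∀ k, (μ k).re = 0) → μ 0 + μ 1 + μ 2 = 0 →
        (∀ k, c1 * T ≤ ‖μ k‖ ∧ ‖μ k‖ ≤ c2 * T) →
        ‖(∏ k : Fin 3,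
            Complex.Gamma ((((1 / 2 - σ : ℝ) : ℂ) + (τ : ℂ) * Complex.I - μ k) / 2) /
                Complex.Gamma ((((1 / 2 + σ : ℝ) : ℂ) + (τ : ℂ) * Complex.I - μ k) / 2) *
              (Complex.Gamma ((((1 / 2 - σ : ℝ) : ℂ) - (τ : ℂ) * Complex.I + μ k) / 2) /
                Complex.Gamma ((((1 / 2 + σ : ℝ) : ℂ) - (τ : ℂ) * Complex.I + μ k) / 2))) -
          (((‖μ 0‖ ^ 2 * ‖μ 1‖ ^ 2 * ‖μ 2‖ ^ 2 / 64) ^ (-σ) : ℝ) : ℂ)‖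
        ≤ C * T ^ (-(6 * σ) - 3 / 4) := by
  set C1 : ℝ := max 1 ((c1 ^ 6 / 64) ^ (-(1/2) : ℝ)) with hC1
  have hC1pos : 0 < C1 := lt_of_lt_of_le one_pos (le_max_left _ _)
  refine ⟨156 / c1 * C1, by positivity, (1 + 100 / c1) ^ 4, by positivity, ?_⟩
  intro T hT σ τ hσ0 hσ2 hτ μ hre _ hnorm
  have hc1' : (0:ℝ) < 100 / c1 := by positivity
  have hT1 : (1:ℝ) ≤ T := le_trans (one_le_pow₀ (by linarith)) hT
  have hTpos : (0:ℝ) < T := lt_of_lt_of_le one_pos hT1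
  have hc1ne : c1 ≠ 0 := hc1.ne'
  have hTne : T ≠ 0 := hTpos.ne'
  -- T^{3/4} is large
  have hT34 : 100 / c1 ≤ T ^ ((3:ℝ)/4) := by
    have h1 : ((1 + 100/c1) ^ 4 : ℝ) ^ ((3:ℝ)/4) ≤ T ^ ((3:ℝ)/4) :=
      Real.rpow_le_rpow (by positivity) hT (by norm_num)
    refine le_trans ?_ h1
    have h2 : ((1 + 100/c1) ^ (4:ℕ) : ℝ) ^ ((3:ℝ)/4) = (1 + 100/c1) ^ (3:ℕ) := by
      rw [← Real.rpow_natCast (1 + 100/c1) 4, ← Real.rpow_mul (by positivity),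
        ← Real.rpow_natCast (1 + 100/c1) 3]
      norm_num
    rw [h2]
    nlinarith [hc1', sq_nonneg (100/c1)]
  set β : ℝ := T ^ (-((3:ℝ)/4)) with hβ
  have hβpos : 0 < β := Real.rpow_pos_of_pos hTpos _
  have hβinv : β = (T ^ ((3:ℝ)/4))⁻¹ := by
    rw [hβ, Real.rpow_neg hTpos.le]
  have hβsmall : β ≤ c1 / 100 := by
    rw [hβinv]
    have h34pos : 0 < T ^ ((3:ℝ)/4) := Real.rpow_pos_of_pos hTpos _
    have := inv_anti₀ hc1' hT34
    rwa [inv_div] at this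
  have hinvT : 1 / T ≤ β := by
    rw [hβinv]
    have hle : T ^ ((3:ℝ)/4) ≤ T := by
      nth_rewrite 2 [← Real.rpow_one T]
      exact Real.rpow_le_rpow_of_exponent_le hT1 (by norm_num)
    rw [one_div]
    exact inv_anti₀ (Real.rpow_pos_of_pos hTpos _) hle
  -- |τ| ≤ (c1/100) T
  have hτT : |τ| ≤ c1 / 100 * T := by
    have hq : T ^ ((1:ℝ)/4) * (100/c1) ≤ T := by
      have h := mul_le_mul_of_nonneg_left hT34 (Real.rpow_nonneg hTpos.le ((1:ℝ)/4))
      rwa [← Real.rpow_add hTpos, show (1:ℝ)/4 + 3/4 = 1 by norm_num, Real.rpow_one] at h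
    have h2 : T ^ ((1:ℝ)/4) ≤ T / (100/c1) := (le_div_iff₀ hc1').2 hq
    have h3 : T / (100/c1) = c1/100 * T := by field_simp
    linarith [hτ, h2, h3.le]
  -- lower bound on c1 * T
  have h4T : (4:ℝ) ≤ c1 * T := by
    have hBern : 1 + 4 * (100/c1) ≤ (1 + 100/c1) ^ 4 := by
      nlinarith [hc1', sq_nonneg (100/c1)]
    have h1 : c1 * ((1 + 100/c1) ^ 4) ≤ c1 * T := mul_le_mul_of_nonneg_left hT hc1.le
    have h2 : c1 * (1 + 4 * (100/c1)) ≤ c1 * ((1 + 100/c1) ^ 4) :=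
      mul_le_mul_of_nonneg_left hBern hc1.le
    have h3 : c1 * (1 + 4 * (100/c1)) = c1 + 400 := by field_simp; ring
    nlinarith [hc1]
  -- imaginary parts
  set m : Fin 3 → ℝ := fun k => (μ k).im with hm
  have hμI : ∀ k, μ k = (m k : ℂ) * Complex.I := by
    intro k
    apply Complex.ext <;> simp [hre k, hm]
  have hnormm : ∀ k, ‖μ k‖ = |m k| := by
    intro k
    rw [hμI k]
    simp
  have hmlow : ∀ k, c1 * T ≤ |m k| := fun k => (hnormm k) ▸ (hnorm k).1
  have hmpos : ∀ k, 0 < |m k| := fun k => lt_of_lt_of_le (by positivity) (hmlow k)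
  have hm0 : ∀ k, m k ≠ 0 := fun k => abs_pos.1 (hmpos k)
  set Y : Fin 3 → ℝ := fun k => (τ - m k) / 2 with hYdef
  have hYabs : ∀ k, |Y k| = |τ - m k| / 2 := by
    intro k
    rw [hYdef]
    rw [abs_div]
    norm_num
  have hYlow : ∀ k, c1 * T / 4 ≤ |Y k| := by
    intro k
    rw [hYabs k]
    have h1 : |m k| - |τ| ≤ |τ - m k| := by
      have := abs_sub_abs_le_abs_sub (m k) τ
      rwa [abs_sub_comm] at this
    have := hmlow k
    have := hτT
    have hc1T : 0 < c1 * T := by positivity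
    nlinarith
  have hY1 : ∀ k, 1 ≤ |Y k| := fun k => le_trans (by linarith [h4T]) (hYlow k)
  have hY0 : ∀ k, Y k ≠ 0 := by
    intro k h
    have := hY1 k
    rw [h] at this
    simp at this
    linarith
  -- the shifted points
  set xr : ℝ := (1/2 - σ) / 2 with hxr
  set A : Fin 3 → ℂ := fun k => (xr : ℂ) + (Y k : ℂ) * Complex.I with hAdef
  have hAre : ∀ k, (A k).re = xr := by intro k; simp [hAdef]
  have hAim : ∀ k, (A k).im = Y k := by intro k; simp [hAdef]
  have hAσim : ∀ k, (A k + (σ:ℂ)).im = Y k := by intro k; simp [hAdef]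
  -- identification with the arguments in the goal
  have hAeq : ∀ k, ((((1 / 2 - σ : ℝ) : ℂ) + (τ : ℂ) * Complex.I - μ k) / 2) = A k := by
    intro k
    rw [hμI k, hAdef]
    simp only [hxr, hYdef]
    push_cast
    ring
  have hBeq : ∀ k, ((((1 / 2 + σ : ℝ) : ℂ) + (τ : ℂ) * Complex.I - μ k) / 2)
      = A k + (σ:ℂ) := by
    intro k
    rw [hμI k, hAdef]
    simp only [hxr, hYdef]
    push_cast
    ring
  have hA'eq : ∀ k, ((((1 / 2 - σ : ℝ) : ℂ) - (τ : ℂ) * Complex.I + μ k) / 2)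
      = (starRingEnd ℂ) (A k) := by
    intro k
    rw [hμI k, hAdef]
    simp only [hxr, hYdef, map_add, map_mul, Complex.conj_ofReal, Complex.conj_I]
    push_cast
    ring
  have hB'eq : ∀ k, ((((1 / 2 + σ : ℝ) : ℂ) - (τ : ℂ) * Complex.I + μ k) / 2)
      = (starRingEnd ℂ) (A k + (σ:ℂ)) := by
    intro k
    rw [hμI k, hAdef]
    simp only [hxr, hYdef, map_add, map_mul, Complex.conj_ofReal, Complex.conj_I]
    push_cast
    ring
  -- nonvanishing of Gamma
  have hΓA : ∀ k, Complex.Gamma (A k) ≠ 0 := by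
    intro k
    apply Complex.Gamma_ne_zero
    intro n h
    apply hY0 k
    have := congrArg Complex.im h
    rw [hAim] at this
    simpa using this
  have hΓB : ∀ k, Complex.Gamma (A k + (σ:ℂ)) ≠ 0 := by
    intro k
    apply Complex.Gamma_ne_zero
    intro n h
    apply hY0 k
    have := congrArg Complex.im h
    rw [hAσim] at this
    simpa using this
  set R : Fin 3 → ℝ := fun k => ‖Complex.Gamma (A k) / Complex.Gamma (A k + (σ:ℂ))‖ ^ 2
    with hRdef
  have hRpos : ∀ k, 0 < R k := by
    intro k
    rw [hRdef]
    have : Complex.Gamma (A k) / Complex.Gamma (A k + (σ:ℂ)) ≠ 0 :=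
      div_ne_zero (hΓA k) (hΓB k)
    exact pow_pos (norm_pos_iff.2 this) 2
  -- each factor of the product is the real number R k
  have hfac : ∀ k : Fin 3,
      Complex.Gamma ((((1 / 2 - σ : ℝ) : ℂ) + (τ : ℂ) * Complex.I - μ k) / 2) /
          Complex.Gamma ((((1 / 2 + σ : ℝ) : ℂ) + (τ : ℂ) * Complex.I - μ k) / 2) *
        (Complex.Gamma ((((1 / 2 - σ : ℝ) : ℂ) - (τ : ℂ) * Complex.I + μ k) / 2) /
          Complex.Gamma ((((1 / 2 + σ : ℝ) : ℂ) - (τ : ℂ) * Complex.I + μ k) / 2))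
      = ((R k : ℝ) : ℂ) := by
    intro k
    rw [hAeq k, hBeq k, hA'eq k, hB'eq k, Complex.Gamma_conj, Complex.Gamma_conj,
      ← map_div₀, Complex.mul_conj, hRdef]
    norm_cast
    rw [Complex.normSq_eq_norm_sq]
  -- main analytic estimate per factor
  have hEst : ∀ k, |Real.log (R k) + σ * Real.log ((Y k) ^ 2)| ≤ 12 * σ / |Y k| := by
    intro k
    have h := lemA (A k) σ (by rw [hAre, hxr]; linarith) (by rw [hAre, hxr]; linarith)
      hσ0 (by rw [hAim]; exact hY1 k)
    rw [hAim] at h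
    exact h
  -- compare log (Y k)^2 with log (‖μ k‖^2/4)
  have hComp : ∀ k, |Real.log ((Y k) ^ 2) - Real.log (‖μ k‖ ^ 2 / 4)| ≤ 4 * (β / c1) := by
    intro k
    have hδ : |τ| / |m k| ≤ β / c1 := by
      have h1 : |τ| / |m k| ≤ T ^ ((1:ℝ)/4) / (c1 * T) :=
        div_le_div₀ (by positivity) hτ (by positivity) (hmlow k)
      have hβT : β = T ^ ((1:ℝ)/4) / T := by
        rw [hβ, show -((3:ℝ)/4) = 1/4 - 1 by norm_num, Real.rpow_sub hTpos, Real.rpow_one]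
      have h2 : T ^ ((1:ℝ)/4) / (c1 * T) = β / c1 := by
        rw [hβT, div_div, mul_comm T c1]
      rw [← h2]
      exact h1
    have hδ2 : β / c1 ≤ 1 / 2 := by
      have h1 : β / c1 ≤ (c1 / 100) / c1 := (div_le_div_iff_of_pos_right hc1).2 hβsmall
      have h2 : (c1 / 100) / c1 = 1 / 100 := by
        field_simp
        try ring
      linarith
    have hδ0 : (0:ℝ) ≤ β / c1 := by positivity
    have habs1 : |m k| - |τ| ≤ |τ - m k| := by
      have := abs_sub_abs_le_abs_sub (m k) τ
      rwa [abs_sub_comm] at this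
    have habs2 : |τ - m k| ≤ |τ| + |m k| := by
      have := abs_add_le τ (-(m k))
      simpa [sub_eq_add_neg] using this
    have hδm : |τ| ≤ β / c1 * |m k| := (div_le_iff₀ (hmpos k)).1 hδ
    have hρlow : 1 - β / c1 ≤ |τ - m k| / |m k| := by
      rw [le_div_iff₀ (hmpos k)]
      linarith [hδm, habs1]
    have hρhigh : |τ - m k| / |m k| ≤ 1 + β / c1 := by
      rw [div_le_iff₀ (hmpos k)]
      linarith [hδm, habs2]
    have hlog : |Real.log (|τ - m k| / |m k|)| ≤ 2 * (β / c1) :=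
      abs_log_near_one hδ0 hδ2 hρlow hρhigh
    have hYne : (Y k) ^ 2 ≠ 0 := pow_ne_zero 2 (hY0 k)
    have hμne : ‖μ k‖ ^ 2 / 4 ≠ 0 := by
      rw [hnormm k]
      have := hmpos k
      positivity
    have hquot : (Y k) ^ 2 / (‖μ k‖ ^ 2 / 4) = (|τ - m k| / |m k|) ^ 2 := by
      rw [hnormm k, hYdef]
      simp only [div_pow, sq_abs]
      field_simp
      ring
    rw [← Real.log_div hYne hμne, hquot, Real.log_pow]
    push_cast
    rw [abs_mul, _root_.abs_two]
    linarith
  -- per-factor total bound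
  have hDk : ∀ k, |Real.log (R k) + σ * Real.log (‖μ k‖ ^ 2 / 4)| ≤ 52 * (σ * β / c1) := by
    intro k
    have h1 := hEst k
    have h2 := hComp k
    have h3 : 12 * σ / |Y k| ≤ 48 * σ / (c1 * T) := by
      have ha : 12 * σ / |Y k| ≤ 12 * σ / (c1 * T / 4) :=
        div_le_div_of_nonneg_left (by positivity) (by positivity) (hYlow k)
      have hb : 12 * σ / (c1 * T / 4) = 48 * σ / (c1 * T) := by
        field_simp
        ring
      linarith
    have h4 : 48 * σ / (c1 * T) ≤ 48 * σ * β / c1 := by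
      rw [div_le_div_iff₀ (by positivity) hc1]
      have hβT1 : 1 ≤ β * T := by
        have hbt : β * T = T ^ ((1:ℝ)/4) := by
          rw [hβ]
          nth_rewrite 2 [← Real.rpow_one T]
          rw [← Real.rpow_add hTpos]
          norm_num
        rw [hbt]
        calc (1:ℝ) = 1 ^ ((1:ℝ)/4) := by rw [Real.one_rpow]
          _ ≤ T ^ ((1:ℝ)/4) := Real.rpow_le_rpow (by norm_num) hT1 (by norm_num)
      linarith [mul_nonneg (mul_nonneg hσ0.le hc1.le) (sub_nonneg.2 hβT1)]
    have key : Real.log (R k) + σ * Real.log (‖μ k‖ ^ 2 / 4)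
        = (Real.log (R k) + σ * Real.log ((Y k) ^ 2))
          - σ * (Real.log ((Y k) ^ 2) - Real.log (‖μ k‖ ^ 2 / 4)) := by ring
    rw [key]
    have habs : |(Real.log (R k) + σ * Real.log ((Y k) ^ 2))
          - σ * (Real.log ((Y k) ^ 2) - Real.log (‖μ k‖ ^ 2 / 4))|
        ≤ |Real.log (R k) + σ * Real.log ((Y k) ^ 2)|
          + σ * |Real.log ((Y k) ^ 2) - Real.log (‖μ k‖ ^ 2 / 4)| := by
      refine (abs_sub _ _).trans ?_
      rw [abs_mul, abs_of_pos hσ0]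
    refine habs.trans ?_
    have h6 : σ * |Real.log ((Y k) ^ 2) - Real.log (‖μ k‖ ^ 2 / 4)| ≤ σ * (4 * (β / c1)) :=
      mul_le_mul_of_nonneg_left h2 hσ0.le
    calc |Real.log (R k) + σ * Real.log ((Y k) ^ 2)|
          + σ * |Real.log ((Y k) ^ 2) - Real.log (‖μ k‖ ^ 2 / 4)|
        ≤ 48 * σ * β / c1 + σ * (4 * (β / c1)) := add_le_add (h1.trans (h3.trans h4)) h6
      _ = 52 * (σ * β / c1) := by ring
  -- total exponent difference
  set D : ℝ := (Real.log (R 0) + σ * Real.log (‖μ 0‖ ^ 2 / 4))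
      + (Real.log (R 1) + σ * Real.log (‖μ 1‖ ^ 2 / 4))
      + (Real.log (R 2) + σ * Real.log (‖μ 2‖ ^ 2 / 4)) with hD
  have hDbound : |D| ≤ 156 * (σ * β / c1) := by
    have h0 := hDk 0
    have h1 := hDk 1
    have h2 := hDk 2
    have htri := abs_add_three (Real.log (R 0) + σ * Real.log (‖μ 0‖ ^ 2 / 4))
      (Real.log (R 1) + σ * Real.log (‖μ 1‖ ^ 2 / 4))
      (Real.log (R 2) + σ * Real.log (‖μ 2‖ ^ 2 / 4))
    rw [hD]
    linarith
  have hσβ : (0:ℝ) ≤ β / c1 := by positivity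
  have hD1 : |D| ≤ 1 := by
    have hp : 2 * (σ * β / c1) ≤ β / c1 := by
      have hh := mul_le_mul_of_nonneg_right (show 2 * σ ≤ 1 by linarith) hσβ
      calc 2 * (σ * β / c1) = 2 * σ * (β / c1) := by ring
        _ ≤ 1 * (β / c1) := hh
        _ = β / c1 := one_mul _
    have h2 : (c1 / 100) / c1 = 1 / 100 := by
      field_simp
      try ring
    have h3 : β / c1 ≤ 1 / 100 := by
      have h4 := (div_le_div_iff_of_pos_right hc1).2 hβsmall
      linarith
    linarith [hDbound, hp, h3]
  -- the main term
  set Q : ℝ := ‖μ 0‖ ^ 2 * ‖μ 1‖ ^ 2 * ‖μ 2‖ ^ 2 / 64 with hQ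
  have hQpos : 0 < Q := by
    rw [hQ, hnormm 0, hnormm 1, hnormm 2]
    have := hmpos 0
    have := hmpos 1
    have := hmpos 2
    positivity
  have hne0 : ‖μ 0‖ ^ 2 / 4 ≠ 0 := by rw [hnormm 0]; have := hmpos 0; positivity
  have hne1 : ‖μ 1‖ ^ 2 / 4 ≠ 0 := by rw [hnormm 1]; have := hmpos 1; positivity
  have hne2 : ‖μ 2‖ ^ 2 / 4 ≠ 0 := by rw [hnormm 2]; have := hmpos 2; positivity
  have hlogQ : Real.log Q = Real.log (‖μ 0‖ ^ 2 / 4) + Real.log (‖μ 1‖ ^ 2 / 4)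
      + Real.log (‖μ 2‖ ^ 2 / 4) := by
    have hQsplit : Q = (‖μ 0‖ ^ 2 / 4) * (‖μ 1‖ ^ 2 / 4) * (‖μ 2‖ ^ 2 / 4) := by
      rw [hQ]; ring
    rw [hQsplit, Real.log_mul (mul_ne_zero hne0 hne1) hne2, Real.log_mul hne0 hne1]
  have hPexp : R 0 * R 1 * R 2
      = Real.exp (Real.log (R 0) + Real.log (R 1) + Real.log (R 2)) := by
    rw [Real.exp_add, Real.exp_add, Real.exp_log (hRpos 0), Real.exp_log (hRpos 1),
      Real.exp_log (hRpos 2)]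
  have hMexp : Q ^ (-σ) = Real.exp (Real.log Q * (-σ)) := Real.rpow_def_of_pos hQpos _
  have hdiff : |R 0 * R 1 * R 2 - Q ^ (-σ)| ≤ Q ^ (-σ) * (2 * |D|) := by
    rw [hPexp, hMexp]
    have hsum : Real.log (R 0) + Real.log (R 1) + Real.log (R 2)
        = Real.log Q * (-σ) + D := by
      rw [hD, hlogQ]; ring
    rw [hsum, Real.exp_add]
    have hfactor : Real.exp (Real.log Q * (-σ)) * Real.exp D - Real.exp (Real.log Q * (-σ))
        = Real.exp (Real.log Q * (-σ)) * (Real.exp D - 1) := by ring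
    rw [hfactor, abs_mul, abs_of_pos (Real.exp_pos _)]
    exact mul_le_mul_of_nonneg_left (Real.abs_exp_sub_one_le hD1) (Real.exp_pos _).le
  -- bound the main term
  have hQge : (c1 * T) ^ 6 / 64 ≤ Q := by
    rw [hQ]
    have hc1T : (0:ℝ) ≤ c1 * T := by positivity
    have h0 : (c1 * T) ^ 2 ≤ ‖μ 0‖ ^ 2 := pow_le_pow_left₀ hc1T (hnorm 0).1 2
    have h1 : (c1 * T) ^ 2 ≤ ‖μ 1‖ ^ 2 := pow_le_pow_left₀ hc1T (hnorm 1).1 2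
    have h2 : (c1 * T) ^ 2 ≤ ‖μ 2‖ ^ 2 := pow_le_pow_left₀ hc1T (hnorm 2).1 2
    have hstep : (c1 * T) ^ 2 * (c1 * T) ^ 2 * (c1 * T) ^ 2
        ≤ ‖μ 0‖ ^ 2 * ‖μ 1‖ ^ 2 * ‖μ 2‖ ^ 2 := by
      have ha : (0:ℝ) ≤ (c1*T)^2 := by positivity
      have hb : (0:ℝ) ≤ ‖μ 0‖ ^ 2 := by positivity
      have hc : (0:ℝ) ≤ ‖μ 0‖ ^ 2 * ‖μ 1‖ ^ 2 := by positivity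
      calc (c1 * T) ^ 2 * (c1 * T) ^ 2 * (c1 * T) ^ 2
          ≤ ‖μ 0‖ ^ 2 * (c1 * T) ^ 2 * (c1 * T) ^ 2 :=
            mul_le_mul_of_nonneg_right (mul_le_mul_of_nonneg_right h0 ha) ha
        _ ≤ ‖μ 0‖ ^ 2 * ‖μ 1‖ ^ 2 * (c1 * T) ^ 2 :=
            mul_le_mul_of_nonneg_right (mul_le_mul_of_nonneg_left h1 hb) ha
        _ ≤ ‖μ 0‖ ^ 2 * ‖μ 1‖ ^ 2 * ‖μ 2‖ ^ 2 := mul_le_mul_of_nonneg_left h2 hc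
    have hpow : ((c1 * T) ^ 6 : ℝ) = (c1 * T) ^ 2 * (c1 * T) ^ 2 * (c1 * T) ^ 2 := by ring
    rw [hpow]
    linarith
  have hM : Q ^ (-σ) ≤ C1 * T ^ (-(6 * σ)) := by
    have hbase : (0:ℝ) < (c1 * T) ^ 6 / 64 := by positivity
    have h1 : Q ^ (-σ) ≤ ((c1 * T) ^ 6 / 64) ^ (-σ) := by
      rw [Real.rpow_neg hQpos.le, Real.rpow_neg hbase.le]
      exact inv_anti₀ (Real.rpow_pos_of_pos hbase _)
        (Real.rpow_le_rpow hbase.le hQge hσ0.le)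
    have h2 : ((c1 * T) ^ 6 / 64 : ℝ) = (c1 ^ 6 / 64) * T ^ (6:ℕ) := by ring
    have h3 : ((c1 * T) ^ 6 / 64 : ℝ) ^ (-σ) = (c1 ^ 6 / 64) ^ (-σ) * ((T:ℝ) ^ (6:ℕ)) ^ (-σ) := by
      rw [h2, Real.mul_rpow (by positivity) (by positivity)]
    have h4 : (((T:ℝ) ^ (6:ℕ)) : ℝ) ^ (-σ) = T ^ (-(6 * σ)) := by
      rw [← Real.rpow_natCast T 6, ← Real.rpow_mul hTpos.le]
      congr 1
      push_cast
      ring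
    have h5 : (c1 ^ 6 / 64 : ℝ) ^ (-σ) ≤ C1 := by
      rcases le_or_gt 1 (c1 ^ 6 / 64) with hb | hb
      · have hle : (c1 ^ 6 / 64 : ℝ) ^ (-σ) ≤ (c1 ^ 6 / 64) ^ (0:ℝ) :=
          Real.rpow_le_rpow_of_exponent_le hb (by linarith)
        rw [Real.rpow_zero] at hle
        exact hle.trans (le_max_left _ _)
      · have hle : (c1 ^ 6 / 64 : ℝ) ^ (-σ) ≤ (c1 ^ 6 / 64) ^ (-(1/2) : ℝ) :=
          Real.rpow_le_rpow_of_exponent_ge (by positivity) hb.le (by linarith)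
        exact hle.trans (le_max_right _ _)
    calc Q ^ (-σ) ≤ ((c1 * T) ^ 6 / 64) ^ (-σ) := h1
      _ = (c1 ^ 6 / 64) ^ (-σ) * T ^ (-(6 * σ)) := by rw [h3, h4]
      _ ≤ C1 * T ^ (-(6 * σ)) :=
          mul_le_mul_of_nonneg_right h5 (Real.rpow_nonneg hTpos.le _)
  -- convert the complex goal to the real estimate
  have hprod : (∏ k : Fin 3,
      Complex.Gamma ((((1 / 2 - σ : ℝ) : ℂ) + (τ : ℂ) * Complex.I - μ k) / 2) /
          Complex.Gamma ((((1 / 2 + σ : ℝ) : ℂ) + (τ : ℂ) * Complex.I - μ k) / 2) *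
        (Complex.Gamma ((((1 / 2 - σ : ℝ) : ℂ) - (τ : ℂ) * Complex.I + μ k) / 2) /
          Complex.Gamma ((((1 / 2 + σ : ℝ) : ℂ) - (τ : ℂ) * Complex.I + μ k) / 2)))
      = ((R 0 * R 1 * R 2 : ℝ) : ℂ) := by
    rw [Fin.prod_univ_three, hfac 0, hfac 1, hfac 2]
    push_cast
    ring
  rw [hprod, show (((‖μ 0‖ ^ 2 * ‖μ 1‖ ^ 2 * ‖μ 2‖ ^ 2 / 64) ^ (-σ) : ℝ) : ℂ)
      = ((Q ^ (-σ) : ℝ) : ℂ) from by rw [hQ], ← Complex.ofReal_sub,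
    Complex.norm_real, Real.norm_eq_abs]
  refine hdiff.trans ?_
  have h2D : 2 * |D| ≤ 156 / c1 * β := by
    have hp : 2 * (σ * β / c1) ≤ β / c1 := by
      have hh := mul_le_mul_of_nonneg_right (show 2 * σ ≤ 1 by linarith) hσβ
      calc 2 * (σ * β / c1) = 2 * σ * (β / c1) := by ring
        _ ≤ 1 * (β / c1) := hh
        _ = β / c1 := one_mul _
    rw [show (156:ℝ) / c1 * β = 156 * (β / c1) from by ring]
    linarith [hDbound, hp]
  have hnn1 : (0:ℝ) ≤ 2 * |D| := by positivity
  have hnn2 : (0:ℝ) ≤ C1 * T ^ (-(6 * σ)) := by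
    have := Real.rpow_nonneg hTpos.le (-(6 * σ))
    positivity
  calc Q ^ (-σ) * (2 * |D|) ≤ (C1 * T ^ (-(6 * σ))) * (156 / c1 * β) :=
        mul_le_mul hM h2D hnn1 hnn2
    _ = 156 / c1 * C1 * (T ^ (-(6 * σ)) * β) := by ring
    _ = 156 / c1 * C1 * T ^ (-(6 * σ) - 3 / 4) := by
        rw [hβ, ← Real.rpow_add hTpos]
        congr 2
        try ring
end

section
/- Let D ≥ 1 and δ ≥ 2 be integers and let n1, n2 be arbitrary integers. Then Σ_{a=0}^{δ−1} S̃(n1, n2, a; D, Dδ) = 0. -/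
/-!
After exchanging the order of summation, the sum over `a` sits innermost, and `a` enters the
summand only through the factor `e(a · v / δ)` with `v = C₂⁻¹ mod δ`. Since `C₂` is a unit
mod `δ`, so is `v`, hence `e(v / δ)` is a primitive `δ`-th root of unity and the geometric sum
over `a` vanishes.
-/

open Complex

/-- `e(x) = exp(2πix)`. -/
noncomputable def eChar (x : ℝ) : ℂ := Complex.exp (2 * Real.pi * Complex.I * (x : ℂ))

/-- The GL(3) Kloosterman sum `S̃(n₁,n₂,m₁;D₁,D₂)` for `D₁ ∣ D₂`, where inverses are taken
via `ZMod`. -/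
noncomputable def KloostermanTilde (n1 n2 m1 : ℤ) (D1 D2 : ℕ) : ℂ :=
  ∑ C1 ∈ (Finset.range D1).filter (fun C1 => Nat.Coprime C1 D1),
    ∑ C2 ∈ (Finset.range D2).filter (fun C2 => Nat.Coprime C2 (D2 / D1)),
      eChar ((n2 : ℝ) * ((((C1 : ZMod D1)⁻¹).val : ℕ) : ℝ) * (C2 : ℝ) / (D1 : ℝ)
        + (m1 : ℝ) * ((((C2 : ZMod (D2 / D1))⁻¹).val : ℕ) : ℝ) / ((D2 / D1 : ℕ) : ℝ)
        + (n1 : ℝ) * (C1 : ℝ) / (D1 : ℝ))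

open Finset

lemma eChar_add (x y : ℝ) : eChar (x + y) = eChar x * eChar y := by
  simp only [eChar, ofReal_add, mul_add, exp_add]

lemma eChar_natCast_mul_div (a v q : ℕ) :
    eChar (a * v / q) = (exp (2 * Real.pi * I / q) ^ v) ^ a := by
  rw [← pow_mul, ← exp_nat_mul, eChar]
  push_cast
  ring_nf

lemma sum_range_eChar_natCast_mul_div_eq_zero {q v : ℕ} (hq : 2 ≤ q) (hv : v.Coprime q) :
    ∑ a ∈ range q, eChar (a * v / q) = 0 := by
  simp only [eChar_natCast_mul_div]
  exact ((isPrimitiveRoot_exp q (by omega)).pow_of_coprime v hv).geom_sum_eq_zero (by omega)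

lemma ZMod.val_inv_natCast_coprime {q c : ℕ} (hc : c.Coprime q) :
    ((c : ZMod q)⁻¹).val.Coprime q := by
  rw [← ZMod.coe_unitOfCoprime c hc, ZMod.inv_coe_unit]
  exact ZMod.val_coe_unit_coprime _

lemma sum_range_kloostermanTilde_eq_zero (n1 n2 : ℤ) {D1 D2 : ℕ} (h : 2 ≤ D2 / D1) :
    ∑ a ∈ range (D2 / D1), KloostermanTilde n1 n2 a D1 D2 = 0 := by
  unfold KloostermanTilde
  rw [sum_comm]
  refine sum_eq_zero fun C1 _ => ?_
  rw [sum_comm]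
  refine sum_eq_zero fun C2 hC2 => ?_
  set q := D2 / D1
  set v := ((C2 : ZMod q)⁻¹).val
  have hv : v.Coprime q := ZMod.val_inv_natCast_coprime (mem_filter.mp hC2).2
  calc _ = ∑ a ∈ range q, eChar (n2 * ((C1 : ZMod D1)⁻¹).val * C2 / D1 + n1 * C1 / D1)
          * eChar (a * v / q) := by
        refine sum_congr rfl fun a _ => ?_
        rw [← eChar_add]
        congr 1
        push_cast
        ring
    _ = 0 := by rw [← mul_sum, sum_range_eChar_natCast_mul_div_eq_zero h hv, mul_zero]

/-- For `δ ≥ 2`, the sum over `a` mod `δ` of `S̃(n₁,n₂,a;D,Dδ)` vanishes. -/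
theorem kloosterman_sum_over_a_vanishes (D δ : ℕ) (hD : 1 ≤ D) (hδ : 2 ≤ δ)
    (n1 n2 : ℤ) :
    ∑ a ∈ Finset.range δ, KloostermanTilde n1 n2 (a : ℤ) D (D * δ) = 0 := by
  have hq : D * δ / D = δ := Nat.mul_div_cancel_left δ hD
  have := sum_range_kloostermanTilde_eq_zero n1 n2 (D1 := D) (D2 := D * δ) (by rwa [hq])
  rwa [hq] at this
end
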